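/- Let A ⊆ {±1}^d be a set of points such that every two distinct u,v ∈ A differ in between (1−ε)d/2 and (1+ε)d/2 coordinates, where 0 < ε < 1, and let t satisfy (1+ε)√2 ≤ t ≤ (1−ε)·2 (assuming such t exists, i.e., ε small enough). Then: (a) every t-spanner of A (in the Euclidean metric) must contain all |A|(|A|−1)/2 pairs as edges; (b) adding the origin 0 ∈ ℝ^d, the star centered at 0 with leaves A is a t-spanner of A ∪ {0}. -/

import Mathlib

/-!
The points of `A` are pairwise at distance `2 √h` with `h` the Hamming distance, hence all
their distances lie in `[√(2(1-ε)d), √(2(1+ε)d)]`: `A` is nearly equilateral. A path between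
`u, v ∈ A` that leaves `u` towards a third point `w` has length at least `dist u w + dist w v`, which
exceeds `t · dist u v` once `t ≤ 2(1-ε)`, so a `t`-spanner must contain the edge `uv`. On the
other hand every point of `A` has norm `√d`, and `2√d ≤ t · √(2(1-ε)d)` once `t ≥ (1+ε)√2`
and `ε` is small, which makes the star through the origin a `t`-spanner.
-/

/-- Total length of a polygonal path (sum of distances between consecutive
vertices). -/
noncomputable def pathWeight {X : Type*} [MetricSpace X] : List X → ℝ
  | [] => 0
  | [_] => 0
  | a :: b :: rest => dist a b + pathWeight (b :: rest)

section Paths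

variable {X : Type*} [MetricSpace X]

lemma pathWeight_cons_cons (a b : X) (l : List X) :
    pathWeight (a :: b :: l) = dist a b + pathWeight (b :: l) := rfl

lemma dist_le_pathWeight : ∀ (a b : X) (l : List X),
    (a :: l).getLast? = some b → dist a b ≤ pathWeight (a :: l)
  | a, b, [], h => by simp_all [pathWeight]
  | a, b, c :: l, h => by
    rw [List.getLast?_cons_cons] at h
    calc dist a b ≤ dist a c + dist c b := dist_triangle a c b
      _ ≤ dist a c + pathWeight (c :: l) := by gcongr; exact dist_le_pathWeight c b l h

/-- The witness is the first vertex of the path other than `u`. -/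
lemma exists_rel_ne_dist_add_dist_le_pathWeight {R : X → X → Prop} :
    ∀ {p : List X} {u v : X}, p.head? = some u → p.getLast? = some v → p.IsChain R → u ≠ v →
      ∃ w, R u w ∧ w ≠ u ∧ dist u w + dist w v ≤ pathWeight p
  | [], _, _, hu, _, _, _ => by simp at hu
  | [a], _, _, hu, hv, _, huv => by simp_all
  | a :: c :: l, u, v, hu, hv, hp, huv => by
    obtain rfl : a = u := by simpa using hu
    rw [List.getLast?_cons_cons] at hv
    rw [pathWeight_cons_cons]
    by_cases hca : c = a
    · subst hca
      obtain ⟨w, hRw, hwc, hw⟩ :=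
        exists_rel_ne_dist_add_dist_le_pathWeight (p := c :: l) rfl hv hp.tail huv
      exact ⟨w, hRw, hwc, by simpa using hw⟩
    · exact ⟨c, hp.rel, hca, by gcongr; exact dist_le_pathWeight c v l hv⟩

lemma rel_of_pathWeight_le_of_detour {R : X → X → Prop} {S : Set X} (hRS : ∀ x y, R x y → y ∈ S)
    {t : ℝ} {u v : X} (huv : u ≠ v)
    (hdetour : ∀ w ∈ S, w ≠ u → w ≠ v → t * dist u v < dist u w + dist w v)
    {p : List X} (hu : p.head? = some u) (hv : p.getLast? = some v) (hp : p.IsChain R)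
    (hw : pathWeight p ≤ t * dist u v) : R u v := by
  obtain ⟨w, hRw, hwu, hwp⟩ := exists_rel_ne_dist_add_dist_le_pathWeight hu hv hp huv
  by_contra hR
  have hwv : w ≠ v := by rintro rfl; exact hR hRw
  linarith [hdetour w (hRS u w hRw) hwu hwv]

end Paths

section SignVectors

variable {ι : Type*} [Fintype ι]

open Classical in
lemma dist_eq_sqrt_four_mul_card_ne {u v : EuclideanSpace ℝ ι}
    (hu : ∀ k, u k = 1 ∨ u k = -1) (hv : ∀ k, v k = 1 ∨ v k = -1) :
    dist u v = √(4 * (Finset.univ.filter (fun k => u k ≠ v k)).card) := by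
  have hk (k : ι) : dist (u k) (v k) ^ 2 = if u k ≠ v k then 4 else 0 := by
    rcases hu k with h1 | h1 <;> rcases hv k with h2 | h2 <;> norm_num [Real.dist_eq, h1, h2]
  rw [EuclideanSpace.dist_eq, Finset.sum_congr rfl fun k _ => hk k, Finset.sum_ite,
    Finset.sum_const, Finset.sum_const_zero, nsmul_eq_mul, add_zero, mul_comm]

lemma norm_eq_sqrt_card {u : EuclideanSpace ℝ ι} (hu : ∀ k, u k = 1 ∨ u k = -1) :
    ‖u‖ = √(Fintype.card ι) := by
  have hk (k : ι) : u k ^ 2 = 1 := by rcases hu k with h | h <;> simp [h]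
  simp [EuclideanSpace.norm_eq, hk]

end SignVectors

lemma one_sub_mul_lt_sqrt {ε d x : ℝ} (hε0 : 0 < ε) (hε1 : ε < 1) (hx : 0 < x)
    (hxd : x ≤ √(2 * (1 + ε) * d)) : (1 - ε) * x < √(2 * (1 - ε) * d) := by
  have hx2 : x ^ 2 ≤ 2 * (1 + ε) * d := (Real.le_sqrt' hx).1 hxd
  have hd : 0 < d := by nlinarith
  rw [Real.lt_sqrt (by nlinarith)]
  calc ((1 - ε) * x) ^ 2 ≤ (1 - ε) ^ 2 * (2 * (1 + ε) * d) := by rw [mul_pow]; gcongr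
    _ = 2 * (1 - ε) * d - 2 * (1 - ε) * d * ε ^ 2 := by ring
    _ < 2 * (1 - ε) * d := sub_lt_self _ (by positivity)

lemma two_mul_sqrt_le {ε d : ℝ} (hε0 : 0 ≤ ε) (hε : ε ≤ 1 / 3) (hd : 0 ≤ d) :
    2 * √d ≤ (1 + ε) * √2 * √(2 * (1 - ε) * d) := by
  have h1ε : 0 ≤ 1 - ε := by linarith
  rw [← pow_le_pow_iff_left₀ (by positivity) (by positivity) two_ne_zero, mul_pow, mul_pow,
    mul_pow, Real.sq_sqrt hd, Real.sq_sqrt zero_le_two, Real.sq_sqrt (by positivity)]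
  nlinarith [mul_nonneg (mul_nonneg hd hε0) (by nlinarith : (0 : ℝ) ≤ 1 - ε - ε ^ 2)]

open Classical in
theorem hypercube_spanner_general (dim : ℕ) (ε t : ℝ) (hε0 : 0 < ε)
    (ht1 : (1 + ε) * Real.sqrt 2 ≤ t) (ht2 : t ≤ (1 - ε) * 2)
    (A : Finset (EuclideanSpace ℝ (Fin dim)))
    (hpm : ∀ u ∈ A, ∀ k, u k = 1 ∨ u k = -1)
    (hdiff : ∀ u ∈ A, ∀ v ∈ A, u ≠ v →
      (1 - ε) * dim / 2 ≤ ((Finset.univ.filter (fun k => u k ≠ v k)).card : ℝ) ∧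
      ((Finset.univ.filter (fun k => u k ≠ v k)).card : ℝ) ≤ (1 + ε) * dim / 2) :
    (∀ E : Set (EuclideanSpace ℝ (Fin dim) × EuclideanSpace ℝ (Fin dim)),
      (∀ e ∈ E, e.1 ∈ A ∧ e.2 ∈ A) →
      (∀ u ∈ A, ∀ v ∈ A, ∃ p : List (EuclideanSpace ℝ (Fin dim)),
        p.head? = some u ∧ p.getLast? = some v ∧
        List.Chain' (fun x y => (x, y) ∈ E ∨ (y, x) ∈ E) p ∧
        pathWeight p ≤ t * dist u v) →
      ∀ u ∈ A, ∀ v ∈ A, u ≠ v → (u, v) ∈ E ∨ (v, u) ∈ E) ∧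
    (∀ u ∈ A, ∀ v ∈ A, u ≠ v →
      dist u (0 : EuclideanSpace ℝ (Fin dim)) +
          dist (0 : EuclideanSpace ℝ (Fin dim)) v ≤ t * dist u v) := by
  have hε : ε ≤ 1 / 3 := by nlinarith [Real.one_lt_sqrt_two]
  have ht0 : 0 ≤ t := le_trans (by positivity) ht1
  have hdist : ∀ u ∈ A, ∀ v ∈ A, u ≠ v →
      √(2 * (1 - ε) * dim) ≤ dist u v ∧ dist u v ≤ √(2 * (1 + ε) * dim) := by
    intro u hu v hv huv
    obtain ⟨hlo, hhi⟩ := hdiff u hu v hv huv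
    rw [dist_eq_sqrt_four_mul_card_ne (hpm u hu) (hpm v hv)]
    constructor <;> apply Real.sqrt_le_sqrt <;> linarith
  refine ⟨fun E hE hspan u hu v hv huv => ?_, fun u hu v hv huv => ?_⟩
  · obtain ⟨p, hpu, hpv, hp, hpt⟩ := hspan u hu v hv
    refine rel_of_pathWeight_le_of_detour (R := fun x y => (x, y) ∈ E ∨ (y, x) ∈ E)
      (S := A) ?_ huv (fun w hw hwu hwv => ?_) hpu hpv hp hpt
    · rintro x y (hxy | hyx)
      exacts [(hE _ hxy).2, (hE _ hyx).1]
    calc t * dist u v ≤ 2 * ((1 - ε) * dist u v) := by nlinarith [dist_nonneg (x := u) (y := v)]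
      _ < 2 * √(2 * (1 - ε) * dim) := by
        gcongr
        exact one_sub_mul_lt_sqrt hε0 (by linarith) (dist_pos.2 huv) (hdist u hu v hv huv).2
      _ ≤ dist u w + dist w v := by
        linarith [(hdist u hu w hw hwu.symm).1, (hdist w hw v hv hwv).1]
  · rw [dist_zero_right, dist_zero_left, norm_eq_sqrt_card (hpm u hu),
      norm_eq_sqrt_card (hpm v hv), Fintype.card_fin]
    calc √dim + √dim ≤ (1 + ε) * √2 * √(2 * (1 - ε) * dim) :=
          by linarith [two_mul_sqrt_le hε0.le hε (Nat.cast_nonneg dim)]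
      _ ≤ t * dist u v := by gcongr; exact (hdist u hu v hv huv).1

open Classical in
/-- Let `A ⊆ {±1}^dim` be such that every two distinct points of `A` differ in
between `(1−ε)dim/2` and `(1+ε)dim/2` coordinates, and let
`(1+ε)√2 ≤ t ≤ (1−ε)·2`. Then (a) every `t`-spanner of `A` (in the Euclidean
metric) contains all pairs of distinct points of `A` as edges, and (b) the star
centered at the origin with leaves `A` is a `t`-spanner of `A ∪ {0}`. -/
theorem hypercube_spanner (dim : ℕ) (ε t : ℝ) (hε0 : 0 < ε) (hε1 : ε < 1)
    (ht1 : (1 + ε) * Real.sqrt 2 ≤ t) (ht2 : t ≤ (1 - ε) * 2)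
    (A : Finset (EuclideanSpace ℝ (Fin dim)))
    (hpm : ∀ u ∈ A, ∀ k, u k = 1 ∨ u k = -1)
    (hdiff : ∀ u ∈ A, ∀ v ∈ A, u ≠ v →
      (1 - ε) * dim / 2 ≤ ((Finset.univ.filter (fun k => u k ≠ v k)).card : ℝ) ∧
      ((Finset.univ.filter (fun k => u k ≠ v k)).card : ℝ) ≤ (1 + ε) * dim / 2) :
    (∀ E : Set (EuclideanSpace ℝ (Fin dim) × EuclideanSpace ℝ (Fin dim)),
      (∀ e ∈ E, e.1 ∈ A ∧ e.2 ∈ A) →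
      (∀ u ∈ A, ∀ v ∈ A, ∃ p : List (EuclideanSpace ℝ (Fin dim)),
        p.head? = some u ∧ p.getLast? = some v ∧
        List.Chain' (fun x y => (x, y) ∈ E ∨ (y, x) ∈ E) p ∧
        pathWeight p ≤ t * dist u v) →
      ∀ u ∈ A, ∀ v ∈ A, u ≠ v → (u, v) ∈ E ∨ (v, u) ∈ E) ∧
    (∀ u ∈ A, ∀ v ∈ A, u ≠ v →
      dist u (0 : EuclideanSpace ℝ (Fin dim)) +
          dist (0 : EuclideanSpace ℝ (Fin dim)) v ≤ t * dist u v) :=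
  hypercube_spanner_general dim ε t hε0 ht1 ht2 A hpm hdiff
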